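/- In the prompt-tuned memory-augmented HMM with prompt π defined by π_{(m_{1:N},j,s)} = 1 if m_{j*} ∈ supp(b) and 0 otherwise, assume the initial hidden-state distribution is stationary (P(H_0) = A P(H_0)). Then for every x ∈ X^T with P(X̂ = x̂) > 0: b^T P(M_{j*} | X̂ = x̂) = b^T P(M_{j*} | X_{1:T} = x) / P(X̂_1 = z̃ | X̂_{2:T+1} = x). -/

import Mathlib

open scoped Classical
open Matrix

noncomputable section

/-- Forward pass for a Markov chain with transition matrix `A`. -/
def fwdVec {H : Type*} [Fintype H] (A : Matrix H H ℝ) :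
    (H → ℝ) → List (H → ℝ) → (H → ℝ)
  | μ, [] => μ
  | μ, v :: vs => fwdVec A (A.mulVec fun h => μ h * v h) vs

/-- `mJointAt A μ W m x i g = P(H_i = g, X_{−i} = x_{−i} | M = m)` in a
memory-augmented HMM (hidden chain `H_1, …, H_T`, `P(H_1) = A μ`). -/
def mJointAt {𝕄 S X : Type*} {N T : ℕ} [Fintype S] [DecidableEq S]
    (A : Matrix (Fin N × S) (Fin N × S) ℝ) (μ : Fin N × S → ℝ)
    (W : X → 𝕄 → Fin N × S → ℝ) (m : Fin N → 𝕄)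
    (x : Fin T → X) (i : Fin T) (g : Fin N × S) : ℝ :=
  ∑ h, fwdVec A (A.mulVec μ)
    (List.ofFn fun k : Fin T =>
      if k = i then (fun g' => if g' = g then 1 else 0)
      else fun g' => W (x k) (m g'.1) g') h

/-- `mZ … x i = P(X_{−i} = x_{−i})`. -/
def mZ {𝕄 S X : Type*} {N T : ℕ} [Fintype 𝕄] [Fintype S] [DecidableEq S]
    (pM : (Fin N → 𝕄) → ℝ) (A : Matrix (Fin N × S) (Fin N × S) ℝ)
    (μ : Fin N × S → ℝ) (W : X → 𝕄 → Fin N × S → ℝ)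
    (x : Fin T → X) (i : Fin T) : ℝ :=
  ∑ m, pM m * ∑ g, mJointAt A μ W m x i g

/-- `mSeqPm … m x = P(X_{1:T} = x | M = m)`. -/
def mSeqPm {𝕄 S X : Type*} {N T : ℕ} [Fintype S]
    (A : Matrix (Fin N × S) (Fin N × S) ℝ) (μ : Fin N × S → ℝ)
    (W : X → 𝕄 → Fin N × S → ℝ) (m : Fin N → 𝕄) (x : Fin T → X) : ℝ :=
  ∑ h, fwdVec A (A.mulVec μ)
    (List.ofFn fun k : Fin T => fun g' => W (x k) (m g'.1) g') h

/-- `mSeqP … x = P(X_{1:T} = x)`. -/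
def mSeqP {𝕄 S X : Type*} {N T : ℕ} [Fintype 𝕄] [Fintype S]
    (pM : (Fin N → 𝕄) → ℝ) (A : Matrix (Fin N × S) (Fin N × S) ℝ)
    (μ : Fin N × S → ℝ) (W : X → 𝕄 → Fin N × S → ℝ) (x : Fin T → X) : ℝ :=
  ∑ m, pM m * mSeqPm A μ W m x

/-- `mGtok … x i z = P(X_i = z | X_{−i} = x_{−i})`, the pretrained model
output `G_i(x)` at position `i`. -/
def mGtok {𝕄 S X : Type*} {N T : ℕ} [Fintype 𝕄] [Fintype S] [DecidableEq S]
    (pM : (Fin N → 𝕄) → ℝ) (A : Matrix (Fin N × S) (Fin N × S) ℝ)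
    (μ : Fin N × S → ℝ) (W : X → 𝕄 → Fin N × S → ℝ)
    (x : Fin T → X) (i : Fin T) (z : X) : ℝ :=
  (∑ m, pM m * ∑ g, mJointAt A μ W m x i g * W z (m g.1) g) / mZ pM A μ W x i

/-- `mPostH … x i g = P(H_i = g | X_{−i} = x_{−i})`. -/
def mPostH {𝕄 S X : Type*} {N T : ℕ} [Fintype 𝕄] [Fintype S] [DecidableEq S]
    (pM : (Fin N → 𝕄) → ℝ) (A : Matrix (Fin N × S) (Fin N × S) ℝ)
    (μ : Fin N × S → ℝ) (W : X → 𝕄 → Fin N × S → ℝ)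
    (x : Fin T → X) (i : Fin T) (g : Fin N × S) : ℝ :=
  (∑ m, pM m * mJointAt A μ W m x i g) / mZ pM A μ W x i

/-- The 0/1 prompt of the paper: `π_{(m_{1:N},j,s)} = 1` if `m_{j*} ∈ supp(b)`
and `0` otherwise (it does not depend on `(j,s)`). -/
def promptV {𝕄 : Type*} {N : ℕ} (b : 𝕄 → ℝ) (jstar : Fin N)
    (m : Fin N → 𝕄) : ℝ :=
  if b (m jstar) ≠ 0 then 1 else 0

/-- Conditioned on `M = m`, the emission-likelihood vector at position `k`
(0-indexed) of the modified sequence `x̂ = (z̃, x_1, …, x_T)`: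
at position `0` the fake token `z̃` has likelihood `π_{(m,j,s)}`, and at
position `k ≥ 1` the token `x_k` has likelihood `W (x_k) (m j) (j,s)`. -/
def hatEm {𝕄 S X : Type*} {N T : ℕ} (W : X → 𝕄 → Fin N × S → ℝ)
    (b : 𝕄 → ℝ) (jstar : Fin N) (m : Fin N → 𝕄) (x : Fin T → X)
    (k : Fin (T + 1)) : Fin N × S → ℝ :=
  if hk : (k : ℕ) = 0 then fun _ => promptV b jstar m
  else fun g => W (x ⟨(k : ℕ) - 1, by have := k.isLt; omega⟩) (m g.1) g

/-- `hatJointAt … m x i g = P(H_i = g, X̂_{−i} = x̂_{−i} | M = m)` for the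
modified sequence `X̂` of length `T+1` (hidden chain `H_1, …, H_{T+1}`,
`P(H_1) = A μ`). -/
def hatJointAt {𝕄 S X : Type*} {N T : ℕ} [Fintype S] [DecidableEq S]
    (A : Matrix (Fin N × S) (Fin N × S) ℝ) (μ : Fin N × S → ℝ)
    (W : X → 𝕄 → Fin N × S → ℝ) (b : 𝕄 → ℝ) (jstar : Fin N)
    (m : Fin N → 𝕄) (x : Fin T → X) (i : Fin (T + 1)) (g : Fin N × S) : ℝ :=
  ∑ h, fwdVec A (A.mulVec μ)
    (List.ofFn fun k : Fin (T + 1) =>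
      if k = i then (fun g' => if g' = g then 1 else 0)
      else hatEm W b jstar m x k) h

/-- `hatZ … x i = P(X̂_{−i} = x̂_{−i})`. -/
def hatZ {𝕄 S X : Type*} {N T : ℕ} [Fintype 𝕄] [Fintype S] [DecidableEq S]
    (pM : (Fin N → 𝕄) → ℝ) (A : Matrix (Fin N × S) (Fin N × S) ℝ)
    (μ : Fin N × S → ℝ) (W : X → 𝕄 → Fin N × S → ℝ) (b : 𝕄 → ℝ)
    (jstar : Fin N) (x : Fin T → X) (i : Fin (T + 1)) : ℝ :=
  ∑ m, pM m * ∑ g, hatJointAt A μ W b jstar m x i g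

/-- `hatSeqPm … m x = P(X̂ = x̂ | M = m)`. -/
def hatSeqPm {𝕄 S X : Type*} {N T : ℕ} [Fintype S]
    (A : Matrix (Fin N × S) (Fin N × S) ℝ) (μ : Fin N × S → ℝ)
    (W : X → 𝕄 → Fin N × S → ℝ) (b : 𝕄 → ℝ) (jstar : Fin N)
    (m : Fin N → 𝕄) (x : Fin T → X) : ℝ :=
  ∑ h, fwdVec A (A.mulVec μ) (List.ofFn (hatEm W b jstar m x)) h

/-- `hatSeqP … x = P(X̂ = x̂)`. -/
def hatSeqP {𝕄 S X : Type*} {N T : ℕ} [Fintype 𝕄] [Fintype S]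
    (pM : (Fin N → 𝕄) → ℝ) (A : Matrix (Fin N × S) (Fin N × S) ℝ)
    (μ : Fin N × S → ℝ) (W : X → 𝕄 → Fin N × S → ℝ) (b : 𝕄 → ℝ)
    (jstar : Fin N) (x : Fin T → X) : ℝ :=
  ∑ m, pM m * hatSeqPm A μ W b jstar m x

/-!
Under stationarity, marginalising out the hidden state of a step whose observation carries no
information leaves the forward pass unchanged. Hence removing the fake token `z̃` from `x̂` gives
`P(X̂_{2:T+1} = x) = P(X = x)`, while keeping it multiplies the likelihood of each memory `m` by
the prompt value `π(m) = 𝟙(b(m_{j*}) ≠ 0)`. Weighting by `b(m_{j*})` makes this factor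
invisible, so both sides equal `∑_m b(m_{j*}) P(M = m) P(X = x | M = m) / P(X̂ = x̂)`.
-/

section ForwardPass

variable {H : Type*} [Fintype H] (A : Matrix H H ℝ)

theorem fwdVec_cons (μ v : H → ℝ) (vs : List (H → ℝ)) :
    fwdVec A μ (v :: vs) = fwdVec A (A *ᵥ (μ * v)) vs := rfl

theorem fwdVec_add (vs : List (H → ℝ)) (μ ν : H → ℝ) :
    fwdVec A (μ + ν) vs = fwdVec A μ vs + fwdVec A ν vs := by
  induction vs generalizing μ ν with
  | nil => rfl
  | cons v vs ih =>
    rw [fwdVec_cons, fwdVec_cons, fwdVec_cons, add_mul, mulVec_add, ih]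

theorem fwdVec_smul (vs : List (H → ℝ)) (c : ℝ) (μ : H → ℝ) :
    fwdVec A (c • μ) vs = c • fwdVec A μ vs := by
  induction vs generalizing μ with
  | nil => rfl
  | cons v vs ih =>
    rw [fwdVec_cons, fwdVec_cons, smul_mul_assoc, mulVec_smul, ih]

def fwdVecLinearMap (vs : List (H → ℝ)) : (H → ℝ) →ₗ[ℝ] H → ℝ where
  toFun μ := fwdVec A μ vs
  map_add' := fwdVec_add A vs
  map_smul' := fwdVec_smul A vs

theorem fwdVec_nonneg (hA : ∀ g g', 0 ≤ A g' g) {vs : List (H → ℝ)}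
    (hvs : ∀ v ∈ vs, 0 ≤ v) {μ : H → ℝ} (hμ : 0 ≤ μ) : 0 ≤ fwdVec A μ vs := by
  induction vs generalizing μ with
  | nil => exact hμ
  | cons v vs ih =>
    refine ih (fun w hw => hvs w (List.mem_cons_of_mem _ hw)) fun h => ?_
    exact Finset.sum_nonneg fun g _ =>
      mul_nonneg (hA g h) (mul_nonneg (hμ g) (hvs v List.mem_cons_self g))

theorem fwdVec_cons_const (μ : H → ℝ) (c : ℝ) (vs : List (H → ℝ)) :
    fwdVec A μ ((fun _ => c) :: vs) = c • fwdVec A (A *ᵥ μ) vs := by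
  rw [fwdVec_cons, ← fwdVec_smul, ← mulVec_smul]
  congr 2
  ext h
  exact mul_comm _ _

theorem sum_fwdVec_cons_indicator [DecidableEq H] (μ : H → ℝ) (vs : List (H → ℝ)) :
    ∑ g, fwdVec A μ ((fun h => if h = g then 1 else 0) :: vs) = fwdVec A (A *ᵥ μ) vs := by
  have hμ : ∑ g, μ * (fun h => if h = g then 1 else 0) = μ := by
    ext h
    simp [Finset.sum_apply, mul_ite]
  simp only [fwdVec_cons]
  change ∑ g, fwdVecLinearMap A vs (A *ᵥ (μ * _)) = _
  rw [← map_sum]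
  change fwdVecLinearMap A vs (∑ g, mulVecLin A _) = _
  rw [← map_sum, hμ]
  rfl

end ForwardPass

section PromptedModel

variable {𝕄 S X : Type*} {N T : ℕ}
  (A : Matrix (Fin N × S) (Fin N × S) ℝ) (μ : Fin N × S → ℝ) (W : X → 𝕄 → Fin N × S → ℝ)
  (b : 𝕄 → ℝ) (jstar : Fin N) (m : Fin N → 𝕄) (x : Fin T → X)

theorem hatEm_zero : hatEm W b jstar m x 0 = fun _ => promptV b jstar m := rfl

theorem hatEm_succ (k : Fin T) :
    hatEm W b jstar m x k.succ = fun g => W (x k) (m g.1) g := by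
  simp [hatEm]

variable [Fintype S]

theorem hatSeqPm_eq_promptV_mul (hstat : A *ᵥ μ = μ) :
    hatSeqPm A μ W b jstar m x = promptV b jstar m * mSeqPm A μ W m x := by
  simp only [hatSeqPm, mSeqPm, List.ofFn_succ, hatEm_zero, hatEm_succ, fwdVec_cons_const,
    hstat, Finset.mul_sum, Pi.smul_apply, smul_eq_mul]

theorem sum_hatJointAt_zero [DecidableEq S] (hstat : A *ᵥ μ = μ) :
    ∑ g, hatJointAt A μ W b jstar m x 0 g = mSeqPm A μ W m x := by
  simp only [hatJointAt, mSeqPm, List.ofFn_succ, if_pos, Fin.succ_ne_zero, if_false,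
    hatEm_succ]
  rw [Finset.sum_comm]
  simp only [← Finset.sum_apply, sum_fwdVec_cons_indicator, hstat]

theorem mSeqPm_nonneg (hμ0 : ∀ g, 0 ≤ μ g) (hA0 : ∀ g g', 0 ≤ A g' g)
    (hW0 : ∀ z m0 g, 0 ≤ W z m0 g) : 0 ≤ mSeqPm A μ W m x := by
  refine Finset.sum_nonneg fun h _ => fwdVec_nonneg A hA0 ?_ ?_ h
  · intro v hv g
    obtain ⟨k, rfl⟩ := List.mem_ofFn.mp hv
    exact hW0 _ _ _
  · intro g
    exact Finset.sum_nonneg fun g' _ => mul_nonneg (hA0 g' g) (hμ0 g')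

end PromptedModel

theorem promptV_le_one {𝕄 : Type*} {N : ℕ} (b : 𝕄 → ℝ) (jstar : Fin N) (m : Fin N → 𝕄) :
    promptV b jstar m ≤ 1 := by
  unfold promptV
  split_ifs <;> norm_num

theorem mul_promptV_self {𝕄 : Type*} {N : ℕ} (b : 𝕄 → ℝ) (jstar : Fin N) (m : Fin N → 𝕄) :
    b (m jstar) * promptV b jstar m = b (m jstar) := by
  by_cases hb : b (m jstar) = 0 <;> simp [promptV, hb]

theorem sum_mul_marginal_div {ι α : Type*} [Fintype ι] [Fintype α] [DecidableEq α]
    (b : α → ℝ) (key : ι → α) (p : ι → ℝ) (Z : ℝ) :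
    ∑ a, b a * ((∑ i, if key i = a then p i else 0) / Z) = (∑ i, b (key i) * p i) / Z := by
  simp only [Finset.sum_div, ite_div, zero_div, Finset.mul_sum, mul_ite, mul_zero]
  rw [Finset.sum_comm]
  simp [mul_div_assoc]

theorem stmt14_general {𝕄 S X : Type*} {N : ℕ}
    [Fintype 𝕄] [Fintype S] [DecidableEq 𝕄] [DecidableEq S]
    (pM : (Fin N → 𝕄) → ℝ) (μ : Fin N × S → ℝ)
    (A : Matrix (Fin N × S) (Fin N × S) ℝ) (W : X → 𝕄 → Fin N × S → ℝ)
    (hpM0 : ∀ m, 0 ≤ pM m)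
    (hμ0 : ∀ g, 0 ≤ μ g)
    (hA0 : ∀ g g', 0 ≤ A g' g)
    (hW0 : ∀ z m0 g, 0 ≤ W z m0 g)
    -- stationarity of the initial hidden-state distribution
    (hstat : A.mulVec μ = μ)
    (b : 𝕄 → ℝ) (jstar : Fin N)
    (T : ℕ) (x : Fin T → X)
    (hpos : 0 < hatSeqP pM A μ W b jstar x) :
    ∑ m0, b m0 *
        ((∑ m, if m jstar = m0 then pM m * hatSeqPm A μ W b jstar m x else 0)
          / hatSeqP pM A μ W b jstar x)
      = (∑ m0, b m0 *
          ((∑ m, if m jstar = m0 then pM m * mSeqPm A μ W m x else 0)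
            / mSeqP pM A μ W x))
        / (hatSeqP pM A μ W b jstar x / hatZ pM A μ W b jstar x 0) := by
  have hhat (m) := hatSeqPm_eq_promptV_mul A μ W b jstar m x hstat
  have hZ : hatZ pM A μ W b jstar x 0 = mSeqP pM A μ W x := by
    simp only [hatZ, mSeqP, sum_hatJointAt_zero A μ W b jstar _ x hstat]
  have hle : hatSeqP pM A μ W b jstar x ≤ mSeqP pM A μ W x := by
    refine Finset.sum_le_sum fun m _ => mul_le_mul_of_nonneg_left ?_ (hpM0 m)
    rw [hhat]
    exact mul_le_of_le_one_left (mSeqPm_nonneg A μ W m x hμ0 hA0 hW0) (promptV_le_one b jstar m)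
  have hweighted : ∑ m, b (m jstar) * (pM m * hatSeqPm A μ W b jstar m x)
      = ∑ m, b (m jstar) * (pM m * mSeqPm A μ W m x) := by
    refine Finset.sum_congr rfl fun m _ => ?_
    rw [hhat, mul_left_comm (pM m), ← mul_assoc, mul_promptV_self, mul_left_comm]
  rw [sum_mul_marginal_div, sum_mul_marginal_div, hweighted, hZ]
  have hP : mSeqP pM A μ W x ≠ 0 := (hpos.trans_le hle).ne'
  field_simp [hpos.ne']

theorem stmt14 {𝕄 S X : Type*} {N : ℕ}
    [Fintype 𝕄] [Fintype S] [Fintype X] [DecidableEq 𝕄] [DecidableEq S]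
    (pM : (Fin N → 𝕄) → ℝ) (μ : Fin N × S → ℝ)
    (A : Matrix (Fin N × S) (Fin N × S) ℝ) (W : X → 𝕄 → Fin N × S → ℝ)
    (hpM0 : ∀ m, 0 ≤ pM m) (hpM1 : ∑ m, pM m = 1)
    (hμ0 : ∀ g, 0 ≤ μ g) (hμ1 : ∑ g, μ g = 1)
    (hA0 : ∀ g g', 0 ≤ A g' g) (hA1 : ∀ g, ∑ g', A g' g = 1)
    (hW0 : ∀ z m0 g, 0 ≤ W z m0 g) (hW1 : ∀ m0 g, ∑ z, W z m0 g = 1)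
    -- stationarity of the initial hidden-state distribution
    (hstat : A.mulVec μ = μ)
    (b : 𝕄 → ℝ) (jstar : Fin N)
    (T : ℕ) (x : Fin T → X)
    (hpos : 0 < hatSeqP pM A μ W b jstar x) :
    ∑ m0, b m0 *
        ((∑ m, if m jstar = m0 then pM m * hatSeqPm A μ W b jstar m x else 0)
          / hatSeqP pM A μ W b jstar x)
      = (∑ m0, b m0 *
          ((∑ m, if m jstar = m0 then pM m * mSeqPm A μ W m x else 0)
            / mSeqP pM A μ W x))
        / (hatSeqP pM A μ W b jstar x / hatZ pM A μ W b jstar x 0) :=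
  stmt14_general pM μ A W hpM0 hμ0 hA0 hW0 hstat b jstar T x hpos
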